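/- Gradient structure of unrolled preconditioned gradient descent at critical points: Let g : ℝ^p × ℝ^d → ℝ be twice continuously differentiable with y ↦ ∂_y g(x,y) L-Lipschitz for every x. Define recursively φ_{T+1}(x,y) = φ_T(x,y) − H_T(x,y)·∂_y g(x, φ_T(x,y)) with φ_0(x,y) = y, where each H_T(x,y) is a symmetric positive-definite matrix-valued map that is continuously differentiable in (x,y) and satisfies H_T(x,y) ⪯ (1/L)I. Then for every (x,y) with ∂_y g(x,y) = 0 and every T ≥ 0, it holds that φ_T(x,y) = y, and there exists a matrix D_T such that ∂_x φ_T(x,y) = ∂²_{xy} g(x,y) · D_T and ∂_y φ_T(x,y) = I + ∂²_{yy} g(x,y) · D_T. -/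

import Mathlib

noncomputable section

open Set Filter Topology Metric RealInnerProductSpace

abbrev Euc (n : ℕ) : Type := EuclideanSpace ℝ (Fin n)

variable {p d : ℕ}

/-- Gradient of `g` with respect to the second variable. -/
noncomputable def gradY (g : Euc p × Euc d → ℝ) (x : Euc p) (y : Euc d) : Euc d :=
  gradient (fun y' => g (x, y')) y

/-- Hessian `∂²_{yy} g` as a continuous linear map. -/
noncomputable def hessYY (g : Euc p × Euc d → ℝ) (x : Euc p) (y : Euc d) :
    Euc d →L[ℝ] Euc d :=
  fderiv ℝ (fun y' => gradY g x y') y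

/-- Mixed Hessian `∂²_{xy} g` as a continuous linear map. -/
noncomputable def hessXY (g : Euc p × Euc d → ℝ) (x : Euc p) (y : Euc d) :
    Euc p →L[ℝ] Euc d :=
  fderiv ℝ (fun x' => gradY g x' y) x

/-- Augmented critical set. -/
def augCrit (g : Euc p × Euc d → ℝ) : Set (Euc p × Euc d) :=
  {z | gradY g z.1 z.2 = 0}

/-- `S` is a `C²` embedded submanifold of dimension `k` of `E`. -/
def IsC2Submanifold {E : Type*} [NormedAddCommGroup E] [NormedSpace ℝ E]
    (k : ℕ) (S : Set E) : Prop :=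
  ∀ z ∈ S, ∃ (W : Submodule ℝ E) (U V : Set E) (ψ ψinv : E → E),
    Module.finrank ℝ W = k ∧
    IsOpen U ∧ z ∈ U ∧ IsOpen V ∧
    ContDiffOn ℝ 2 ψ U ∧ ContDiffOn ℝ 2 ψinv V ∧
    (∀ u ∈ U, ψinv (ψ u) = u) ∧ (∀ v ∈ V, ψ (ψinv v) = v) ∧
    ψ '' U = V ∧ ψ '' (U ∩ S) = V ∩ (W : Set E)

/-- Parametric Morse–Bott function. -/
def IsParamMorseBott (g : Euc p × Euc d → ℝ) : Prop :=
  ∀ z : Euc p × Euc d, gradY g z.1 z.2 = 0 →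
    ∃ V : Set (Euc p × Euc d), IsOpen V ∧ z ∈ V ∧
      IsConnected (augCrit g ∩ V) ∧
      IsC2Submanifold (p + Module.finrank ℝ (LinearMap.ker (hessYY g z.1 z.2 : Euc d →ₗ[ℝ] Euc d)))
        (augCrit g ∩ V)

/-- `g` is `L`-smooth in `y` for some `L > 0`: the `y`-gradient is `L`-Lipschitz in `y`. -/
def SmoothInY (g : Euc p × Euc d → ℝ) : Prop :=
  ∃ L : NNReal, 0 < L ∧ ∀ x, LipschitzWith L (fun y => gradY g x y)

/-- `g` is coercive in `y`: `g (x, y) → +∞` as `‖y‖ → +∞`. -/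
def CoerciveInY (g : Euc p × Euc d → ℝ) : Prop :=
  ∀ x, Tendsto (fun y : Euc d => g (x, y)) (comap (fun y : Euc d => ‖y‖) atTop) atTop

/-- `φflow` is the gradient flow of `y ↦ g (x, y)` started at `y`. -/
def IsGradFlow (g : Euc p × Euc d → ℝ) (φflow : ℝ → Euc p → Euc d → Euc d) : Prop :=
  (∀ x y, φflow 0 x y = y) ∧
  ∀ x y, ∀ t ∈ Ici (0:ℝ),
    HasDerivWithinAt (fun s => φflow s x y) (-(gradY g x (φflow t x y))) (Ici 0) t

/-- `φsel` is the selection obtained as the limit of the gradient flow `φflow`. -/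
def IsFlowSelection (g : Euc p × Euc d → ℝ) (φflow : ℝ → Euc p → Euc d → Euc d)
    (φsel : Euc p → Euc d → Euc d) : Prop :=
  IsGradFlow g φflow ∧ ∀ x y, Tendsto (fun t => φflow t x y) atTop (𝓝 (φsel x y))

/-- Moore–Penrose pseudo-inverse, characterized by the four Penrose conditions. -/
def IsMPInv {E : Type*} [NormedAddCommGroup E] [InnerProductSpace ℝ E] [CompleteSpace E]
    (A B : E →L[ℝ] E) : Prop :=
  A ∘L B ∘L A = A ∧ B ∘L A ∘L B = B ∧
  ContinuousLinearMap.adjoint (A ∘L B) = A ∘L B ∧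
  ContinuousLinearMap.adjoint (B ∘L A) = B ∘L A

/-! At a critical point `(x, y)` of `y ↦ g (x, y)` every iterate of the descent map fixes `y`, so
the gradient factor `∂_y g (x, φ_T (x, y))` vanishes there and the derivative of the preconditioner
`H_T` drops out of the chain rule. What remains is linear in the joint derivative `DG` of
`(x, y) ↦ ∂_y g (x, y)`, and by induction the joint derivative of `φ_T` keeps the shape
`snd + D_T ∘ DG`, with `D_{T+1} = D_T - H_T (x, y) ∘ (I + ∂²_{yy} g (x, y) ∘ D_T)`. Restricting
to the two factors of the product turns `DG` into the mixed and the `y`-Hessian of `g`. -/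

section ProductDerivatives

variable {𝕜 : Type*} [NontriviallyNormedField 𝕜]
  {E F W : Type*} [NormedAddCommGroup E] [NormedSpace 𝕜 E] [NormedAddCommGroup F]
  [NormedSpace 𝕜 F] [NormedAddCommGroup W] [NormedSpace 𝕜 W]

theorem HasFDerivAt.comp_prodMk_left {f : E × F → W} {f' : E × F →L[𝕜] W} {x : E} {y : F}
    (hf : HasFDerivAt f f' (x, y)) :
    HasFDerivAt (fun x' => f (x', y)) (f' ∘L .inl 𝕜 E F) x :=
  hf.comp x (hasFDerivAt_prodMk_left x y)

theorem HasFDerivAt.comp_prodMk_right {f : E × F → W} {f' : E × F →L[𝕜] W} {x : E} {y : F}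
    (hf : HasFDerivAt f f' (x, y)) :
    HasFDerivAt (fun y' => f (x, y')) (f' ∘L .inr 𝕜 E F) y :=
  hf.comp y (hasFDerivAt_prodMk_right x y)

theorem ContinuousLinearMap.fst_prod_snd_add (K : E × F →L[𝕜] F) :
    (fst 𝕜 E F).prod (snd 𝕜 E F + K) = .id 𝕜 (E × F) + inr 𝕜 E F ∘L K := by
  ext <;> simp

theorem HasFDerivAt.descent_step {G : E × F → F} {DG : E × F →L[𝕜] F} {Φ : E × F → F}
    {D : F →L[𝕜] F} {H : E × F → F →L[𝕜] F} {x : E} {y : F}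
    (hΦ : HasFDerivAt Φ (.snd 𝕜 E F + D ∘L DG) (x, y)) (hΦxy : Φ (x, y) = y)
    (hG : HasFDerivAt G DG (x, y)) (hGxy : G (x, y) = 0)
    (hH : DifferentiableAt 𝕜 H (x, y)) :
    HasFDerivAt (fun q => Φ q - H q (G (q.1, Φ q)))
      (.snd 𝕜 E F + (D - H (x, y) ∘L (.id 𝕜 F + DG ∘L .inr 𝕜 E F ∘L D)) ∘L DG) (x, y) := by
  have hpair : HasFDerivAt (fun q : E × F => (q.1, Φ q))
      (.id 𝕜 (E × F) + .inr 𝕜 E F ∘L D ∘L DG) (x, y) := by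
    rw [← ContinuousLinearMap.fst_prod_snd_add]
    exact hasFDerivAt_fst.prodMk hΦ
  have hG' : HasFDerivAt G DG (x, Φ (x, y)) := by rwa [hΦxy]
  have hGΦ := hG'.comp (x, y) hpair
  refine (hΦ.sub (hH.hasFDerivAt.clm_apply hGΦ)).congr_fderiv ?_
  -- `G` vanishes at the base point, so the derivative of `H` is multiplied by zero.
  simp only [Function.comp_apply, hΦxy, hGxy, map_zero, add_zero, ContinuousLinearMap.comp_add,
    ContinuousLinearMap.add_comp, ContinuousLinearMap.sub_comp, ContinuousLinearMap.comp_id,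
    ContinuousLinearMap.comp_assoc]
  abel

theorem unrolled_descent_hasFDerivAt {G : E × F → F} {DG : E × F →L[𝕜] F}
    {H : ℕ → E × F → F →L[𝕜] F} {Φ : ℕ → E × F → F} {x : E} {y : F}
    (hG : HasFDerivAt G DG (x, y)) (hGxy : G (x, y) = 0)
    (hH : ∀ T, DifferentiableAt 𝕜 (H T) (x, y))
    (hΦ0 : ∀ q, Φ 0 q = q.2) (hΦS : ∀ T q, Φ (T + 1) q = Φ T q - H T q (G (q.1, Φ T q)))
    (T : ℕ) :
    Φ T (x, y) = y ∧ ∃ D : F →L[𝕜] F, HasFDerivAt (Φ T) (.snd 𝕜 E F + D ∘L DG) (x, y) := by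
  induction T with
  | zero =>
    refine ⟨hΦ0 _, 0, ?_⟩
    rw [ContinuousLinearMap.zero_comp, add_zero, funext hΦ0]
    exact hasFDerivAt_snd
  | succ T ih =>
    obtain ⟨hfix, D, hΦ⟩ := ih
    refine ⟨by rw [hΦS, hfix, hGxy, map_zero, sub_zero],
      D - H T (x, y) ∘L (.id 𝕜 F + DG ∘L .inr 𝕜 E F ∘L D), ?_⟩
    rw [funext (hΦS T)]
    exact hΦ.descent_step hfix hG hGxy (hH T)

end ProductDerivatives

theorem gradY_eq_toDual_symm {g : Euc p × Euc d → ℝ} {x : Euc p} {y : Euc d}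
    (hg : DifferentiableAt ℝ g (x, y)) :
    gradY g x y = (InnerProductSpace.toDual ℝ (Euc d)).symm
      (fderiv ℝ g (x, y) ∘L .inr ℝ (Euc p) (Euc d)) := by
  rw [gradY, gradient, hg.hasFDerivAt.comp_prodMk_right.fderiv]

theorem contDiff_gradY {g : Euc p × Euc d → ℝ} (hg : ContDiff ℝ 2 g) :
    ContDiff ℝ 1 (fun q : Euc p × Euc d => gradY g q.1 q.2) := by
  rw [funext fun q : Euc p × Euc d => gradY_eq_toDual_symm (hg.differentiable two_ne_zero q)]
  exact (InnerProductSpace.toDual ℝ (Euc d)).symm.contDiff.comp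
    ((hg.fderiv_right le_rfl).clm_comp contDiff_const)

theorem unrolled_descent_gradient_structure_general
    {p d : ℕ} (g : Euc p × Euc d → ℝ) (hg : ContDiff ℝ 2 g)
    (L : ℝ)
    (H : ℕ → Euc p → Euc d → (Euc d →L[ℝ] Euc d))
    (hHdiff : ∀ T : ℕ, ContDiff ℝ 1 (fun q : Euc p × Euc d => H T q.1 q.2))
    (φ : ℕ → Euc p → Euc d → Euc d)
    (hφ0 : ∀ x y, φ 0 x y = y)
    (hφS : ∀ T x y, φ (T + 1) x y = φ T x y - H T x y (gradY g x (φ T x y))) :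
    ∀ (x : Euc p) (y : Euc d), gradY g x y = 0 → ∀ T : ℕ,
      φ T x y = y ∧
      ∃ D : Euc d →L[ℝ] Euc d,
        fderiv ℝ (fun x' => φ T x' y) x = D ∘L hessXY g x y ∧
        fderiv ℝ (fun y' => φ T x y') y =
          ContinuousLinearMap.id ℝ (Euc d) + D ∘L hessYY g x y := by
  intro x y hcrit T
  have hG := ((contDiff_gradY hg).differentiable one_ne_zero (x, y)).hasFDerivAt
  obtain ⟨hfix, D, hΦ⟩ := unrolled_descent_hasFDerivAt (Φ := fun T q => φ T q.1 q.2)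
    (H := fun T q => H T q.1 q.2) hG hcrit (fun T => (hHdiff T).differentiable one_ne_zero _)
    (fun q => hφ0 q.1 q.2) (fun T q => hφS T q.1 q.2) T
  refine ⟨hfix, D, ?_, ?_⟩
  · rw [hΦ.comp_prodMk_left.fderiv, hessXY, hG.comp_prodMk_left.fderiv]
    simp [ContinuousLinearMap.add_comp, ContinuousLinearMap.comp_assoc]
  · rw [hΦ.comp_prodMk_right.fderiv, hessYY, hG.comp_prodMk_right.fderiv]
    simp [ContinuousLinearMap.add_comp, ContinuousLinearMap.comp_assoc]

/-- Gradient structure of unrolled preconditioned gradient descent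
at critical points. -/
theorem unrolled_descent_gradient_structure
    {p d : ℕ} (g : Euc p × Euc d → ℝ) (hg : ContDiff ℝ 2 g)
    (L : ℝ) (hL : 0 < L)
    (hLip : ∀ x : Euc p, LipschitzWith (Real.toNNReal L) (fun y => gradY g x y))
    (H : ℕ → Euc p → Euc d → (Euc d →L[ℝ] Euc d))
    (hHsym : ∀ T x y, ContinuousLinearMap.adjoint (H T x y) = H T x y)
    (hHpos : ∀ T x y, ∀ w : Euc d, w ≠ 0 → 0 < ⟪w, H T x y w⟫)
    (hHle : ∀ T x y, ∀ w : Euc d, ⟪w, H T x y w⟫ ≤ (1 / L) * ‖w‖ ^ 2)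
    (hHdiff : ∀ T : ℕ, ContDiff ℝ 1 (fun q : Euc p × Euc d => H T q.1 q.2))
    (φ : ℕ → Euc p → Euc d → Euc d)
    (hφ0 : ∀ x y, φ 0 x y = y)
    (hφS : ∀ T x y, φ (T + 1) x y = φ T x y - H T x y (gradY g x (φ T x y))) :
    ∀ (x : Euc p) (y : Euc d), gradY g x y = 0 → ∀ T : ℕ,
      φ T x y = y ∧
      ∃ D : Euc d →L[ℝ] Euc d,
        fderiv ℝ (fun x' => φ T x' y) x = D ∘L hessXY g x y ∧
        fderiv ℝ (fun y' => φ T x y') y =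
          ContinuousLinearMap.id ℝ (Euc d) + D ∘L hessYY g x y :=
  unrolled_descent_gradient_structure_general g hg L H hHdiff φ hφ0 hφS

end
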